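/- Let ε ∈ (0,1], k ∈ ℕ, K = 2^{⌈log₂(k+1)⌉}, and let W be the Hadamard Response channel from [k] to [K] with parameter ε. Let α_H = (e^ε−1)/(e^ε+1). For a probability distribution p on [k], let q be the output distribution on [K], i.e. q(z) = Σ_{x∈[k]} W(z|x) p(x), and define q*(z) = 1/K + (α_H/K)(2|D_z|/k − 1), where D_z = {x ∈ [k] : z ∈ C_x}. Then q* is a probability distribution on [K] with ‖q*‖₂ ≤ (1+α_H)/√K, and ‖q − q*‖₂² = (α_H²/K)·‖p − u‖₂², where u is the uniform distribution on [k]. In particular, if p = u then q = q*, and if TV(p,u) > γ then ‖q − q*‖₂² > 4 α_H² γ²/(k K). -/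

import Mathlib

open Finset

/-- Entry of the Sylvester Hadamard matrix of order `2^t`, at row `a`, column `b`
(indices in `{0, …, 2^t − 1}`): `(−1)^{⟨a,b⟩}` where `⟨a,b⟩` is the inner product
mod 2 of the binary representations of `a` and `b`. -/
def hadSign (t a b : ℕ) : ℤ :=
  if (∑ r ∈ Finset.range t, if a.testBit r ∧ b.testBit r then 1 else 0) % 2 = 0 then 1
  else -1

/-- Output alphabet size for Hadamard Response: `K = 2^{⌈log₂(k+1)⌉}`. -/
def hrK (k : ℕ) : ℕ := 2 ^ Nat.clog 2 (k + 1)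

noncomputable def alphaH (ε : ℝ) : ℝ := (Real.exp ε - 1) / (Real.exp ε + 1)

/-- The Hadamard Response channel `W(z|x)`: with the set `C_x ⊆ [K]` encoded by the
`φ(x)`-th row of the Hadamard matrix (`z ∈ C_x` iff the `(φ(x), z)` entry is `+1`),
`W(z|x) = (2/K)·e^ε/(e^ε+1)` for `z ∈ C_x` and `(2/K)·1/(e^ε+1)` otherwise. -/
noncomputable def hrW (ε : ℝ) {k : ℕ} (φ : Fin k → Fin (hrK k)) (x : Fin k)
    (z : Fin (hrK k)) : ℝ :=
  if hadSign (Nat.clog 2 (k + 1)) (φ x).val z.val = 1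
    then (2 / (hrK k : ℝ)) * (Real.exp ε / (Real.exp ε + 1))
    else (2 / (hrK k : ℝ)) * (1 / (Real.exp ε + 1))

/-- Output distribution `q` of Hadamard Response when the input distribution is `p`. -/
noncomputable def hrOut (ε : ℝ) {k : ℕ} (φ : Fin k → Fin (hrK k)) (p : Fin k → ℝ)
    (z : Fin (hrK k)) : ℝ :=
  ∑ x, hrW ε φ x z * p x

/-- `|D_z|`, the number of inputs `x ∈ [k]` with `z ∈ C_x`. -/
def Dcard {k : ℕ} (φ : Fin k → Fin (hrK k)) (z : Fin (hrK k)) : ℕ :=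
  (Finset.univ.filter fun x : Fin k =>
    hadSign (Nat.clog 2 (k + 1)) (φ x).val z.val = 1).card

/-- The reference distribution `q*(z) = 1/K + (α_H/K)(2|D_z|/k − 1)`. -/
noncomputable def hrQstar (ε : ℝ) {k : ℕ} (φ : Fin k → Fin (hrK k))
    (z : Fin (hrK k)) : ℝ :=
  1 / (hrK k : ℝ) + (alphaH ε / (hrK k : ℝ)) * (2 * (Dcard φ z : ℝ) / (k : ℝ) - 1)

/-!
Write `s_x(z) = ±1` for the `(φ x, z)` entry of the Sylvester–Hadamard matrix, so that
`W(z|x) = (1 + α s_x(z))/K`. Distinct rows of the matrix are orthogonal, and every row other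
than row `0` sums to zero, because flipping a bit on which the row index is nonzero negates the
entry. Hence `W` is stochastic, `q*` is the output distribution of the uniform input, and
`q − q* = (α/K) Σ_x (p x − 1/k) s_x`, whose squared norm is `(α²/K) ‖p − u‖²` by Parseval.
The bound in terms of total variation is then Cauchy–Schwarz, `(Σ_x |p x − 1/k|)² ≤ k ‖p − u‖²`.
-/

theorem hadSign_eq_prod (t a b : ℕ) :
    hadSign t a b = ∏ r ∈ range t, if a.testBit r ∧ b.testBit r then -1 else 1 := by
  have : ∀ r, (if a.testBit r ∧ b.testBit r then (-1 : ℤ) else 1)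
      = (-1) ^ (if a.testBit r ∧ b.testBit r then 1 else 0) := fun r => by split <;> simp
  simp only [this, prod_pow_eq_pow_sum, hadSign]
  split_ifs with h
  · exact (Nat.even_iff.mpr h).neg_one_pow.symm
  · exact (Nat.odd_iff.mpr (Nat.mod_two_ne_zero.mp h)).neg_one_pow.symm

theorem hadSign_eq_one_or_eq_neg_one (t a b : ℕ) : hadSign t a b = 1 ∨ hadSign t a b = -1 := by
  unfold hadSign; split <;> simp

theorem hadSign_comm (t a b : ℕ) : hadSign t a b = hadSign t b a := by
  simp only [hadSign, and_comm]

theorem hadSign_xor_left (t a b z : ℕ) :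
    hadSign t (a ^^^ b) z = hadSign t a z * hadSign t b z := by
  simp only [hadSign_eq_prod, ← prod_mul_distrib, Nat.testBit_xor]
  refine prod_congr rfl fun r _ => ?_
  cases a.testBit r <;> cases b.testBit r <;> cases z.testBit r <;> simp

theorem hadSign_xor_right (t a z w : ℕ) :
    hadSign t a (z ^^^ w) = hadSign t a z * hadSign t a w := by
  rw [hadSign_comm, hadSign_xor_left, hadSign_comm t z, hadSign_comm t w]

theorem hadSign_two_pow {t a r : ℕ} (hr : r < t) (ha : a.testBit r) :
    hadSign t a (2 ^ r) = -1 := by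
  rw [hadSign_eq_prod, prod_eq_single r (fun s _ hs => by simp [Ne.symm hs])
    (fun h => absurd (mem_range.mpr hr) h)]
  simp [ha]

theorem sum_range_hadSign_eq_zero {t a : ℕ} (ha : a ≠ 0) (hat : a < 2 ^ t) :
    ∑ z ∈ range (2 ^ t), hadSign t a z = 0 := by
  obtain ⟨r, hr⟩ := Nat.exists_testBit_of_ne_zero ha
  have hrt : r < t := by
    by_contra! h
    rw [Nat.testBit_lt_two_pow (hat.trans_le (Nat.pow_le_pow_right two_pos h))] at hr
    exact Bool.false_ne_true hr
  refine sum_involution (fun z _ => z ^^^ 2 ^ r)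
    (fun z _ => by rw [hadSign_xor_right, hadSign_two_pow hrt hr]; ring)
    (fun z _ _ h => by
      simpa [Nat.testBit_xor, Nat.testBit_two_pow] using congrArg (Nat.testBit · r) h)
    (fun z hz => mem_range.mpr
      (Nat.xor_lt_two_pow (mem_range.mp hz) (Nat.pow_lt_pow_right one_lt_two hrt)))
    (fun z _ => by simp)

theorem sum_range_hadSign_mul_hadSign {t a b : ℕ} (ha : a < 2 ^ t) (hb : b < 2 ^ t) :
    ∑ z ∈ range (2 ^ t), hadSign t a z * hadSign t b z = if a = b then 2 ^ t else 0 := by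
  simp only [← hadSign_xor_left]
  split_ifs with hab
  · simp [hab, hadSign]
  · exact sum_range_hadSign_eq_zero (by simpa using hab) (Nat.xor_lt_two_pow ha hb)

theorem sum_sq_sum_mul_of_orthogonal {ι κ : Type*} [Fintype ι] [Fintype κ] [DecidableEq ι]
    (s : ι → κ → ℝ) (K : ℝ) (hs : ∀ x y, ∑ z, s x z * s y z = if x = y then K else 0)
    (c : ι → ℝ) : ∑ z, (∑ x, c x * s x z) ^ 2 = K * ∑ x, c x ^ 2 := by
  calc ∑ z, (∑ x, c x * s x z) ^ 2
      = ∑ z, ∑ x, ∑ y, c x * c y * (s x z * s y z) := by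
        simp only [sq, sum_mul_sum]
        exact sum_congr rfl fun z _ => sum_congr rfl fun x _ => sum_congr rfl fun y _ => by ring
    _ = ∑ x, ∑ y, c x * c y * ∑ z, s x z * s y z := by
        simp only [mul_sum]
        rw [sum_comm]
        exact sum_congr rfl fun x _ => sum_comm
    _ = K * ∑ x, c x ^ 2 := by simp [hs, mul_sum, sq, mul_comm]

theorem Real.sqrt_sum_sq_le_div_sqrt_card {κ : Type*} [Fintype κ] {f : κ → ℝ} {B : ℝ}
    (hB : 0 ≤ B) (hf0 : ∀ z, 0 ≤ f z) (hfB : ∀ z, f z ≤ B / Fintype.card κ) :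
    √(∑ z, f z ^ 2) ≤ B / √(Fintype.card κ) := by
  have hsum : ∑ z, f z ^ 2 ≤ B ^ 2 / Fintype.card κ := by
    calc ∑ z, f z ^ 2 ≤ ∑ _z : κ, (B / Fintype.card κ) ^ 2 :=
          sum_le_sum fun z _ => pow_le_pow_left₀ (hf0 z) (hfB z) 2
      _ = B ^ 2 / Fintype.card κ := by
          rcases eq_or_ne (Fintype.card κ : ℝ) 0 with h | h
          · simp [h]
          · simp only [sum_const, card_univ, nsmul_eq_mul]; field_simp
  calc √(∑ z, f z ^ 2) ≤ √(B ^ 2 / Fintype.card κ) := Real.sqrt_le_sqrt hsum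
    _ = B / √(Fintype.card κ) := by rw [Real.sqrt_div' _ (by positivity), Real.sqrt_sq hB]

theorem sq_lt_card_mul_sum_sq_of_lt_sum_abs {ι : Type*} [Fintype ι] {c : ι → ℝ} {γ : ℝ}
    (hγ : 0 ≤ γ) (h : γ < ∑ x, |c x|) : γ ^ 2 < Fintype.card ι * ∑ x, c x ^ 2 := by
  calc γ ^ 2 < (∑ x, |c x|) ^ 2 := pow_lt_pow_left₀ h hγ two_ne_zero
    _ ≤ Fintype.card ι * ∑ x, |c x| ^ 2 := sq_sum_le_card_mul_sum_sq
    _ = Fintype.card ι * ∑ x, c x ^ 2 := by simp only [sq_abs]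

theorem alphaH_nonneg {ε : ℝ} (hε : 0 ≤ ε) : 0 ≤ alphaH ε :=
  div_nonneg (by linarith [Real.add_one_le_exp ε]) (by positivity)

theorem alphaH_pos {ε : ℝ} (hε : 0 < ε) : 0 < alphaH ε :=
  div_pos (by linarith [Real.one_lt_exp_iff.mpr hε]) (by positivity)

section HadamardResponse

variable {k : ℕ} (φ : Fin k → Fin (hrK k))

def hrSign (x : Fin k) (z : Fin (hrK k)) : ℝ := hadSign (Nat.clog 2 (k + 1)) (φ x) z

theorem hrSign_eq_ite (x : Fin k) (z : Fin (hrK k)) :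
    hrSign φ x z = if hadSign (Nat.clog 2 (k + 1)) (φ x) z = 1 then 1 else -1 := by
  rcases hadSign_eq_one_or_eq_neg_one (Nat.clog 2 (k + 1)) (φ x) z with h | h <;> simp [hrSign, h]

theorem hrSign_le_one (x : Fin k) (z : Fin (hrK k)) : hrSign φ x z ≤ 1 := by
  rw [hrSign_eq_ite]; split <;> norm_num

theorem sum_hrSign_eq_zero {x : Fin k} (hx : (φ x).val ≠ 0) : ∑ z, hrSign φ x z = 0 := by
  have := sum_range_hadSign_eq_zero hx (φ x).isLt
  rw [← Fin.sum_univ_eq_sum_range] at this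
  simp only [hrSign]
  exact_mod_cast this

theorem sum_hrSign_mul_hrSign (hφ : Function.Injective φ) (x y : Fin k) :
    ∑ z, hrSign φ x z * hrSign φ y z = if x = y then (hrK k : ℝ) else 0 := by
  have hcast : ∑ z, hrSign φ x z * hrSign φ y z
      = ((∑ z ∈ range (2 ^ Nat.clog 2 (k + 1)), hadSign (Nat.clog 2 (k + 1)) (φ x) z
          * hadSign (Nat.clog 2 (k + 1)) (φ y) z : ℤ) : ℝ) := by
    push_cast [hrSign]
    exact Fin.sum_univ_eq_sum_range (fun z => (hadSign _ (φ x) z : ℝ) * hadSign _ (φ y) z) _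
  rw [hcast, sum_range_hadSign_mul_hadSign (φ x).isLt (φ y).isLt]
  simp only [Fin.val_inj, hφ.eq_iff]
  split <;> simp [hrK]

theorem sum_hrSign_eq (z : Fin (hrK k)) : ∑ x, hrSign φ x z = 2 * (Dcard φ z : ℝ) - k := by
  have : ∀ x, hrSign φ x z
      = 2 * (if hadSign (Nat.clog 2 (k + 1)) (φ x) z = 1 then 1 else 0) - 1 := fun x => by
    rw [hrSign_eq_ite]; split <;> norm_num
  simp only [this, sum_sub_distrib, ← mul_sum, sum_boole]
  simp [Dcard]

theorem hrW_eq (ε : ℝ) (x : Fin k) (z : Fin (hrK k)) :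
    hrW ε φ x z = (1 + alphaH ε * hrSign φ x z) / hrK k := by
  have : Real.exp ε + 1 ≠ 0 := by positivity
  rw [hrSign_eq_ite, hrW, alphaH]
  split_ifs <;> field_simp <;> ring

theorem hrW_nonneg (ε : ℝ) (x : Fin k) (z : Fin (hrK k)) : 0 ≤ hrW ε φ x z := by
  unfold hrW; split <;> positivity

theorem hrW_le {ε : ℝ} (hε : 0 ≤ ε) (x : Fin k) (z : Fin (hrK k)) :
    hrW ε φ x z ≤ (1 + alphaH ε) / hrK k := by
  rw [hrW_eq]
  gcongr
  exact mul_le_of_le_one_right (alphaH_nonneg hε) (hrSign_le_one φ x z)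

theorem sum_hrW (ε : ℝ) {x : Fin k} (hx : (φ x).val ≠ 0) : ∑ z, hrW ε φ x z = 1 := by
  have : (hrK k : ℝ) ≠ 0 := by simp [hrK]
  simp only [hrW_eq, ← sum_div, sum_add_distrib, ← mul_sum, sum_hrSign_eq_zero φ hx]
  simp [this]

variable {p : Fin k → ℝ}

theorem hrOut_nonneg (ε : ℝ) (hp : ∀ x, 0 ≤ p x) (z : Fin (hrK k)) : 0 ≤ hrOut ε φ p z :=
  sum_nonneg fun x _ => mul_nonneg (hrW_nonneg φ ε x z) (hp x)

theorem hrOut_le {ε : ℝ} (hε : 0 ≤ ε) (hp0 : ∀ x, 0 ≤ p x) (hp1 : ∑ x, p x = 1)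
    (z : Fin (hrK k)) : hrOut ε φ p z ≤ (1 + alphaH ε) / hrK k :=
  calc hrOut ε φ p z ≤ ∑ x, (1 + alphaH ε) / hrK k * p x :=
        sum_le_sum fun x _ => mul_le_mul_of_nonneg_right (hrW_le φ hε x z) (hp0 x)
    _ = (1 + alphaH ε) / hrK k := by rw [← mul_sum, hp1, mul_one]

variable (ε : ℝ)

theorem sum_hrOut (hφ0 : ∀ x, (φ x).val ≠ 0) :
    ∑ z, hrOut ε φ p z = ∑ x, p x := by
  simp only [hrOut]
  rw [sum_comm]
  simp [← sum_mul, sum_hrW φ ε (hφ0 _)]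

theorem hrOut_sub_hrOut {p' : Fin k → ℝ} (h : ∑ x, p x = ∑ x, p' x) (z : Fin (hrK k)) :
    hrOut ε φ p z - hrOut ε φ p' z
      = alphaH ε / hrK k * ∑ x, (p x - p' x) * hrSign φ x z := by
  have : ∀ x, hrW ε φ x z * p x - hrW ε φ x z * p' x
      = (p x - p' x) / hrK k + alphaH ε / hrK k * ((p x - p' x) * hrSign φ x z) := fun x => by
    rw [hrW_eq]; ring
  have hsum : ∑ x, (p x - p' x) = 0 := by rw [sum_sub_distrib, h, sub_self]
  simp only [hrOut, ← sum_sub_distrib, this, sum_add_distrib, ← sum_div, ← mul_sum, hsum,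
    zero_div, zero_add]

theorem sum_sq_hrOut_sub_hrOut (hφ : Function.Injective φ) {p' : Fin k → ℝ}
    (h : ∑ x, p x = ∑ x, p' x) :
    ∑ z, (hrOut ε φ p z - hrOut ε φ p' z) ^ 2
      = alphaH ε ^ 2 / hrK k * ∑ x, (p x - p' x) ^ 2 := by
  have : (hrK k : ℝ) ≠ 0 := by simp [hrK]
  simp only [hrOut_sub_hrOut φ ε h, mul_pow, ← mul_sum,
    sum_sq_sum_mul_of_orthogonal _ _ (sum_hrSign_mul_hrSign φ hφ)]
  field_simp

theorem hrQstar_eq_hrOut_uniform (hk : k ≠ 0) :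
    hrQstar ε φ = hrOut ε φ (fun _ => 1 / k) := by
  funext z
  simp only [hrQstar, hrOut, hrW_eq, ← sum_mul, ← sum_div, sum_add_distrib, ← mul_sum,
    sum_hrSign_eq]
  simp
  field_simp

end HadamardResponse

theorem hr_uniformity_structural_general
    (ε : ℝ) (hε0 : 0 < ε) (k : ℕ)
    (φ : Fin k → Fin (hrK k)) (hφ : Function.Injective φ) (hφ0 : ∀ x, (φ x).val ≠ 0)
    (p : Fin k → ℝ) (hp1 : ∑ x, p x = 1)
    (γ : ℝ) (hγ : 0 < γ) :
    (∀ z, 0 ≤ hrQstar ε φ z)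
    ∧ (∑ z, hrQstar ε φ z = 1)
    ∧ Real.sqrt (∑ z, (hrQstar ε φ z) ^ 2) ≤ (1 + alphaH ε) / Real.sqrt (hrK k)
    ∧ (∑ z, (hrOut ε φ p z - hrQstar ε φ z) ^ 2
        = (alphaH ε) ^ 2 / (hrK k : ℝ) * ∑ x, (p x - 1 / (k : ℝ)) ^ 2)
    ∧ ((p = fun _ => 1 / (k : ℝ)) → hrOut ε φ p = hrQstar ε φ)
    ∧ ((1 / 2) * (∑ x, |p x - 1 / (k : ℝ)|) > γ →
        ∑ z, (hrOut ε φ p z - hrQstar ε φ z) ^ 2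
          > 4 * (alphaH ε) ^ 2 * γ ^ 2 / ((k : ℝ) * (hrK k : ℝ))) := by
  have hk : k ≠ 0 := by rintro rfl; simp at hp1
  have hu0 : ∀ x : Fin k, 0 ≤ 1 / (k : ℝ) := fun _ => by positivity
  have hu1 : ∑ _x : Fin k, 1 / (k : ℝ) = 1 := by simp [hk]
  have hdist := sum_sq_hrOut_sub_hrOut φ ε hφ (hp1.trans hu1.symm)
  rw [hrQstar_eq_hrOut_uniform φ ε hk]
  refine ⟨hrOut_nonneg φ ε hu0, by rw [sum_hrOut φ ε hφ0, hu1], ?_, hdist,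
    fun hpu => hpu ▸ rfl, fun hTV => ?_⟩
  · simpa using Real.sqrt_sum_sq_le_div_sqrt_card (by linarith [alphaH_pos hε0])
      (hrOut_nonneg φ ε hu0) (by simpa using hrOut_le φ hε0.le hu0 hu1)
  · have hk' : (0 : ℝ) < k := by positivity
    have hK : (0 : ℝ) < hrK k := by unfold hrK; positivity
    have hα := alphaH_pos hε0
    have hCS := sq_lt_card_mul_sum_sq_of_lt_sum_abs (by positivity : 0 ≤ 2 * γ)
      (by linarith : 2 * γ < ∑ x, |p x - 1 / (k : ℝ)|)
    rw [Fintype.card_fin, ← div_lt_iff₀' hk'] at hCS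
    rw [hdist, gt_iff_lt]
    calc 4 * alphaH ε ^ 2 * γ ^ 2 / (k * hrK k) = alphaH ε ^ 2 / hrK k * ((2 * γ) ^ 2 / k) := by
          field_simp; ring
      _ < _ := mul_lt_mul_of_pos_left hCS (by positivity)

/-- Structural result for uniformity testing via Hadamard Response: `q*` is a
probability distribution with `‖q*‖₂ ≤ (1+α_H)/√K`, the squared `ℓ₂` distance of the
HR output distribution `q` to `q*` equals `(α_H²/K)·‖p − u‖₂²`; in particular `q = q*`
when `p` is uniform, and `‖q − q*‖₂² > 4α_H²γ²/(kK)` when `TV(p, u) > γ`. -/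
theorem hr_uniformity_structural
    (ε : ℝ) (hε0 : 0 < ε) (hε1 : ε ≤ 1) (k : ℕ)
    (φ : Fin k → Fin (hrK k)) (hφ : Function.Injective φ) (hφ0 : ∀ x, (φ x).val ≠ 0)
    (p : Fin k → ℝ) (hp0 : ∀ x, 0 ≤ p x) (hp1 : ∑ x, p x = 1)
    (γ : ℝ) (hγ : 0 < γ) :
    (∀ z, 0 ≤ hrQstar ε φ z)
    ∧ (∑ z, hrQstar ε φ z = 1)
    ∧ Real.sqrt (∑ z, (hrQstar ε φ z) ^ 2) ≤ (1 + alphaH ε) / Real.sqrt (hrK k)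
    ∧ (∑ z, (hrOut ε φ p z - hrQstar ε φ z) ^ 2
        = (alphaH ε) ^ 2 / (hrK k : ℝ) * ∑ x, (p x - 1 / (k : ℝ)) ^ 2)
    ∧ ((p = fun _ => 1 / (k : ℝ)) → hrOut ε φ p = hrQstar ε φ)
    ∧ ((1 / 2) * (∑ x, |p x - 1 / (k : ℝ)|) > γ →
        ∑ z, (hrOut ε φ p z - hrQstar ε φ z) ^ 2
          > 4 * (alphaH ε) ^ 2 * γ ^ 2 / ((k : ℝ) * (hrK k : ℝ))) :=
  hr_uniformity_structural_general ε hε0 k φ hφ hφ0 p hp1 γ hγ
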